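/- Let (S_ξ)_{ξ∈Ξ} be a nondegenerate family of nonzero symmetric gauges in ℝ^N and let S be a nonzero gauge belonging to π↑(Ξ). Then S = ⋂_{x ∈ ℝ^N, x ≠ 0} h_S(x) · J(x), where J(x) denotes the closed convex hull of ⋃_{ξ∈Ξ} (1/h_{S_ξ}(x)) · S_ξ. -/

import Mathlib

open Pointwise

/-- The support function `h_K(x) = sup{⟨x, y⟩ : y ∈ K}` of `K ⊆ ℝ^N`. -/
noncomputable def suppFn {N : ℕ} (K : Set (EuclideanSpace ℝ (Fin N)))
    (x : EuclideanSpace ℝ (Fin N)) : ℝ :=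
  sSup ((fun y => (inner ℝ x y : ℝ)) '' K)

/-- A gauge in `ℝ^N`: a compact convex set containing the origin. -/
def IsGauge {N : ℕ} (K : Set (EuclideanSpace ℝ (Fin N))) : Prop :=
  IsCompact K ∧ Convex ℝ K ∧ (0 : EuclideanSpace ℝ (Fin N)) ∈ K

/-- A family of gauges is nondegenerate if `sup_ξ ‖A‖_{S_ξ} < +∞` for every
linear operator `A` on `ℝ^N`, i.e. there is `C` such that for each `ξ` and each
`x ∈ S ξ` the gauge value `‖A x‖_{S ξ} = inf{β > 0 : A x ∈ β • S ξ}` is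
attained below `C`. -/
def Nondegenerate {N : ℕ} {Ξ : Type*}
    (S : Ξ → Set (EuclideanSpace ℝ (Fin N))) : Prop :=
  ∀ A : EuclideanSpace ℝ (Fin N) →ₗ[ℝ] EuclideanSpace ℝ (Fin N),
    ∃ C : ℝ, ∀ ξ, ∀ x ∈ S ξ, ∃ β : ℝ, 0 < β ∧ β ≤ C ∧ A x ∈ β • S ξ

/-- Closedness of a collection of (nonempty compact) subsets of `ℝ^N` in the
topology of the Hausdorff metric. -/
def IsHausdorffClosed {N : ℕ} (C : Set (Set (EuclideanSpace ℝ (Fin N)))) : Prop :=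
  IsClosed {K : TopologicalSpace.NonemptyCompacts (EuclideanSpace ℝ (Fin N)) |
    (K : Set (EuclideanSpace ℝ (Fin N))) ∈ C}

/-- `π↑(F)`: the least Hausdorff-closed cone of gauges containing `F` that is
closed under the join `K ∨ L = conv (K ∪ L)`. -/
def piUp {N : ℕ} (F : Set (Set (EuclideanSpace ℝ (Fin N)))) :
    Set (Set (EuclideanSpace ℝ (Fin N))) :=
  ⋂₀ {C | (∀ K ∈ C, IsGauge K) ∧ IsHausdorffClosed C ∧ F ⊆ C ∧
      (∀ K ∈ C, ∀ L ∈ C, K + L ∈ C) ∧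
      (∀ K ∈ C, ∀ α : ℝ, 0 ≤ α → α • K ∈ C) ∧
      (∀ K ∈ C, ∀ L ∈ C, convexHull ℝ (K ∪ L) ∈ C)}

/-- `π↓(F)`: the least Hausdorff-closed cone of gauges containing `F` that is
closed under the meet `K ∧ L = K ∩ L`. -/
def piDown {N : ℕ} (F : Set (Set (EuclideanSpace ℝ (Fin N)))) :
    Set (Set (EuclideanSpace ℝ (Fin N))) :=
  ⋂₀ {C | (∀ K ∈ C, IsGauge K) ∧ IsHausdorffClosed C ∧ F ⊆ C ∧
      (∀ K ∈ C, ∀ L ∈ C, K + L ∈ C) ∧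
      (∀ K ∈ C, ∀ α : ℝ, 0 ≤ α → α • K ∈ C) ∧
      (∀ K ∈ C, ∀ L ∈ C, K ∩ L ∈ C)}

/-- `π(F)`: the least Hausdorff-closed cone of gauges containing `F` that is
closed under both the join and the meet. -/
def piBoth {N : ℕ} (F : Set (Set (EuclideanSpace ℝ (Fin N)))) :
    Set (Set (EuclideanSpace ℝ (Fin N))) :=
  ⋂₀ {C | (∀ K ∈ C, IsGauge K) ∧ IsHausdorffClosed C ∧ F ⊆ C ∧
      (∀ K ∈ C, ∀ L ∈ C, K + L ∈ C) ∧
      (∀ K ∈ C, ∀ α : ℝ, 0 ≤ α → α • K ∈ C) ∧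
      (∀ K ∈ C, ∀ L ∈ C, convexHull ℝ (K ∪ L) ∈ C) ∧
      (∀ K ∈ C, ∀ L ∈ C, K ∩ L ∈ C)}

/-! Let `J(x)` be the closed convex hull of `⋃ ξ, (1 / h_{S ξ}(x)) • S ξ`. The gauges `K` with
`K ⊆ h_K(x) • J(x)` for every `x ≠ 0` contain every `S ξ` and are stable under sums, nonnegative
dilations and joins, because `h` is additive, positively homogeneous and turns joins into maxima
while `J(x)` is convex and contains `0`. Nondegeneracy of the family bounds `⟪z, u⟫` by a multiple
of `h_{S ξ}(x)` uniformly in `ξ`, so `J(x)` is compact and the condition survives Hausdorff limits.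
Hence `T` satisfies it. Conversely `J(x)` lies in the half-space `⟪x, ·⟫ ≤ 1`, so the intersection
lies in every supporting half-space of `T`, and `T` is the intersection of those. -/

open Metric Filter Topology TopologicalSpace RealInnerProductSpace

variable {N : ℕ}

local notation "E" => EuclideanSpace ℝ (Fin N)

section SupportFunction

variable {K L : Set (EuclideanSpace ℝ (Fin N))} {x y : EuclideanSpace ℝ (Fin N)}

lemma bddAbove_inner_image (hK : IsCompact K) (x : E) : BddAbove ((fun y => ⟪x, y⟫) '' K) :=
  (hK.image (continuous_const.inner continuous_id)).bddAbove

lemma inner_le_suppFn (hK : IsCompact K) (hy : y ∈ K) : ⟪x, y⟫ ≤ suppFn K x :=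
  le_csSup (bddAbove_inner_image hK x) ⟨y, hy, rfl⟩

lemma suppFn_le {c : ℝ} (hK : K.Nonempty) (h : ∀ y ∈ K, ⟪x, y⟫ ≤ c) : suppFn K x ≤ c :=
  csSup_le (hK.image _) (Set.forall_mem_image.2 h)

lemma suppFn_nonneg (hK : IsCompact K) (h0 : 0 ∈ K) (x : E) : 0 ≤ suppFn K x := by
  simpa using inner_le_suppFn (x := x) hK h0

lemma exists_inner_eq_suppFn (hK : IsCompact K) (hne : K.Nonempty) (x : E) :
    ∃ y ∈ K, ⟪x, y⟫ = suppFn K x :=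
  (hK.image (continuous_const.inner continuous_id)).sSup_mem (hne.image _)

lemma suppFn_add (hK : IsCompact K) (hKne : K.Nonempty) (hL : IsCompact L) (hLne : L.Nonempty)
    (x : E) : suppFn (K + L) x = suppFn K x + suppFn L x := by
  refine le_antisymm (suppFn_le (hKne.add hLne) ?_) ?_
  · rintro _ ⟨a, ha, b, hb, rfl⟩
    rw [inner_add_right]
    exact add_le_add (inner_le_suppFn hK ha) (inner_le_suppFn hL hb)
  · obtain ⟨a, ha, hKa⟩ := exists_inner_eq_suppFn hK hKne x
    obtain ⟨b, hb, hLb⟩ := exists_inner_eq_suppFn hL hLne x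
    rw [← hKa, ← hLb, ← inner_add_right]
    exact inner_le_suppFn (hK.add hL) (Set.add_mem_add ha hb)

lemma suppFn_smul (hK : IsCompact K) (hne : K.Nonempty) {α : ℝ} (hα : 0 ≤ α) (x : E) :
    suppFn (α • K) x = α * suppFn K x := by
  refine le_antisymm (suppFn_le hne.smul_set ?_) ?_
  · rintro _ ⟨a, ha, rfl⟩
    rw [real_inner_smul_right]
    exact mul_le_mul_of_nonneg_left (inner_le_suppFn hK ha) hα
  · obtain ⟨a, ha, hKa⟩ := exists_inner_eq_suppFn hK hne x
    rw [← hKa, ← real_inner_smul_right]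
    exact inner_le_suppFn (hK.smul α) (Set.smul_mem_smul_set ha)

lemma suppFn_convexHull (hK : IsCompact K) (hne : K.Nonempty) (x : E) :
    suppFn (convexHull ℝ K) x = suppFn K x := by
  have hhull : ∀ y ∈ convexHull ℝ K, ⟪x, y⟫ ≤ suppFn K x := fun y hy => by
    obtain ⟨z, hz, hyz⟩ :=
      ((innerₛₗ ℝ x).convexOn convex_univ).exists_ge_of_mem_convexHull K.subset_univ hy
    exact hyz.trans (inner_le_suppFn hK hz)
  refine le_antisymm (suppFn_le (hne.mono (subset_convexHull ℝ K)) hhull) ?_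
  exact csSup_le_csSup ⟨_, Set.forall_mem_image.2 hhull⟩ (hne.image _)
    (Set.image_mono (subset_convexHull ℝ K))

lemma suppFn_union (hK : IsCompact K) (hKne : K.Nonempty) (hL : IsCompact L) (hLne : L.Nonempty)
    (x : E) : suppFn (K ∪ L) x = max (suppFn K x) (suppFn L x) := by
  rw [suppFn, Set.image_union]
  exact csSup_union (bddAbove_inner_image hK x) (hKne.image _) (bddAbove_inner_image hL x)
    (hLne.image _)

lemma suppFn_le_add_mul_hausdorffDist (hK : IsCompact K) (hKne : K.Nonempty) (hL : IsCompact L)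
    (hLne : L.Nonempty) (x : E) : suppFn K x ≤ suppFn L x + ‖x‖ * hausdorffDist K L := by
  refine suppFn_le hKne fun y hy => ?_
  obtain ⟨z, hz, hyz⟩ := hL.exists_infDist_eq_dist hLne y
  have hdist : dist y z ≤ hausdorffDist K L := hyz ▸ infDist_le_hausdorffDist_of_mem hy
    (hausdorffEDist_ne_top_of_nonempty_of_bounded hKne hLne hK.isBounded hL.isBounded)
  calc ⟪x, y⟫ = ⟪x, z⟫ + ⟪x, y - z⟫ := by rw [inner_sub_right]; ring
    _ ≤ suppFn L x + ‖x‖ * ‖y - z‖ :=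
      add_le_add (inner_le_suppFn hL hz) (real_inner_le_norm x _)
    _ ≤ suppFn L x + ‖x‖ * hausdorffDist K L := by
      rw [← dist_eq_norm]; gcongr

lemma lipschitzWith_suppFn (x : E) :
    LipschitzWith ‖x‖₊ fun K : NonemptyCompacts E => suppFn K x :=
  LipschitzWith.of_le_add_mul _ fun K L => by
    simpa [NonemptyCompacts.dist_eq] using
      suppFn_le_add_mul_hausdorffDist K.isCompact K.nonempty L.isCompact L.nonempty x

end SupportFunction

lemma isBounded_of_forall_bddAbove_inner {s : Set E} (h : ∀ z : E, BddAbove ((⟪z, ·⟫) '' s)) :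
    Bornology.IsBounded s := by
  let e := EuclideanSpace.equiv (Fin N) ℝ
  have hcoord : ∀ i, Bornology.IsBounded ((fun w : E => w i) '' s) := fun i => by
    refine isBounded_iff_bddBelow_bddAbove.2 ⟨?_, ?_⟩
    · rw [← bddAbove_neg, ← Set.image_neg_eq_neg, Set.image_image]
      simpa [EuclideanSpace.inner_single_left] using h (-EuclideanSpace.single i 1)
    · simpa [EuclideanSpace.inner_single_left] using h (EuclideanSpace.single i 1)
  have he : Bornology.IsBounded (e '' s) := Bornology.forall_isBounded_image_eval_iff.1
    fun i => by simpa [Set.image_image, e] using hcoord i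
  simpa [Set.image_image] using e.symm.lipschitz.isBounded_image he

namespace TopologicalSpace.NonemptyCompacts

section MetricSpace

variable {α : Type*} [MetricSpace α] {K : ℕ → NonemptyCompacts α} {P : NonemptyCompacts α}

theorem mem_of_tendsto (hKP : Tendsto K atTop (𝓝 P)) {y : ℕ → α} {y₀ : α} (hy : ∀ n, y n ∈ K n)
    (hy₀ : Tendsto y atTop (𝓝 y₀)) : y₀ ∈ P := by
  have hlim := (lipschitz_infDist.continuous.tendsto (y₀, P)).comp (hy₀.prodMk_nhds hKP)
  have hzero : (fun n => infDist (y n) (K n : Set α)) = fun _ => 0 :=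
    funext fun n => infDist_zero_of_mem (hy n)
  rw [Function.comp_def, hzero] at hlim
  exact (P.isCompact.isClosed.mem_iff_infDist_zero P.nonempty).2
    (tendsto_nhds_unique hlim tendsto_const_nhds)

theorem exists_tendsto_of_mem (hKP : Tendsto K atTop (𝓝 P)) {y₀ : α} (hy₀ : y₀ ∈ P) :
    ∃ y : ℕ → α, (∀ n, y n ∈ K n) ∧ Tendsto y atTop (𝓝 y₀) := by
  choose y hy hdist using fun n => (K n).isCompact.exists_infDist_eq_dist (K n).nonempty y₀
  refine ⟨y, hy, tendsto_iff_dist_tendsto_zero.2 ?_⟩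
  have hlim := ((lipschitz_infDist_set y₀).continuous.tendsto P).comp hKP
  rw [infDist_zero_of_mem hy₀] at hlim
  simpa [Function.comp_def, hdist, dist_comm] using hlim

theorem isClosed_setOf_mem (y : α) : IsClosed {K : NonemptyCompacts α | y ∈ K} :=
  IsSeqClosed.isClosed fun _ _ hK hKP => mem_of_tendsto hKP hK tendsto_const_nhds

end MetricSpace

theorem isClosed_setOf_convex {V : Type*} [NormedAddCommGroup V] [NormedSpace ℝ V] :
    IsClosed {K : NonemptyCompacts V | Convex ℝ (K : Set V)} := by
  refine IsSeqClosed.isClosed fun K P hK hKP a ha b hb s t hs ht hst => ?_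
  obtain ⟨u, hu, hua⟩ := exists_tendsto_of_mem hKP ha
  obtain ⟨v, hv, hvb⟩ := exists_tendsto_of_mem hKP hb
  exact mem_of_tendsto hKP (fun n => hK n (hu n) (hv n) hs ht hst)
    ((hua.const_smul s).add (hvb.const_smul t))

theorem isClosed_setOf_subset_suppFn_smul {J : Set E} (hJ : IsCompact J) (x : E) :
    IsClosed {K : NonemptyCompacts E | (K : Set E) ⊆ suppFn K x • J} := by
  refine IsSeqClosed.isClosed fun K P hK hKP y hy => ?_
  obtain ⟨u, hu, huy⟩ := exists_tendsto_of_mem hKP hy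
  choose j hj hju using fun n => Set.mem_smul_set.1 (hK n (hu n))
  obtain ⟨j₀, hj₀, φ, hφ, hjφ⟩ := hJ.tendsto_subseq hj
  have hlim : Tendsto (fun n => suppFn (K (φ n)) x • j (φ n)) atTop (𝓝 (suppFn P x • j₀)) :=
    (((lipschitzWith_suppFn x).continuous.tendsto P).comp (hKP.comp hφ.tendsto_atTop)).smul hjφ
  simp only [hju] at hlim
  exact ⟨j₀, hj₀, tendsto_nhds_unique hlim (huy.comp hφ.tendsto_atTop)⟩

end TopologicalSpace.NonemptyCompacts

lemma isCompact_convexJoin {V : Type*} [AddCommGroup V] [Module ℝ V] [TopologicalSpace V]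
    [IsTopologicalAddGroup V] [ContinuousSMul ℝ V] {K L : Set V} (hK : IsCompact K)
    (hL : IsCompact L) : IsCompact (convexJoin ℝ K L) := by
  have hjoin : convexJoin ℝ K L = (fun p : ℝ × V × V => (1 - p.1) • p.2.1 + p.1 • p.2.2) ''
      (Set.Icc 0 1 ×ˢ K ×ˢ L) := by
    ext y
    simp only [mem_convexJoin, segment_eq_image, Set.mem_image, Set.mem_prod, Prod.exists]
    constructor
    · rintro ⟨a, ha, b, hb, θ, hθ, rfl⟩
      exact ⟨θ, a, b, ⟨hθ, ha, hb⟩, rfl⟩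
    · rintro ⟨θ, a, b, ⟨hθ, ha, hb⟩, rfl⟩
      exact ⟨a, ha, b, hb, θ, hθ, rfl⟩
  rw [hjoin]
  exact (isCompact_Icc.prod (hK.prod hL)).image (by fun_prop)

lemma smul_subset_smul_of_zero_mem {V : Type*} [AddCommGroup V] [Module ℝ V] {J : Set V}
    (hJ : Convex ℝ J) (h0 : 0 ∈ J) {a c : ℝ} (ha : 0 ≤ a) (hac : a ≤ c) : a • J ⊆ c • J := by
  have hsplit : c • J = a • J + (c - a) • J := by
    rw [← hJ.add_smul ha (sub_nonneg.2 hac), add_sub_cancel]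
  rw [hsplit]
  exact fun y hy => by simpa using Set.add_mem_add hy (Set.smul_mem_smul_set (a := c - a) h0)

lemma IsGauge.add {K L : Set E} (hK : IsGauge K) (hL : IsGauge L) : IsGauge (K + L) :=
  ⟨hK.1.add hL.1, hK.2.1.add hL.2.1, by simpa using Set.add_mem_add hK.2.2 hL.2.2⟩

lemma IsGauge.smul {K : Set E} (hK : IsGauge K) (α : ℝ) : IsGauge (α • K) :=
  ⟨hK.1.smul α, hK.2.1.smul α, by simpa using Set.smul_mem_smul_set (a := α) hK.2.2⟩

lemma IsGauge.convexHull_union {K L : Set E} (hK : IsGauge K) (hL : IsGauge L) :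
    IsGauge (convexHull ℝ (K ∪ L)) := by
  refine ⟨?_, convex_convexHull ℝ _, subset_convexHull ℝ _ (Or.inl hK.2.2)⟩
  rw [hK.2.1.convexHull_union hL.2.1 ⟨0, hK.2.2⟩ ⟨0, hL.2.2⟩]
  exact isCompact_convexJoin hK.1 hL.1

lemma mem_of_forall_inner_le_suppFn {T : Set E} (hTc : IsClosed T) (hTcv : Convex ℝ T)
    (hne : T.Nonempty) {y : E} (h : ∀ x, ⟪x, y⟫ ≤ suppFn T x) : y ∈ T := by
  by_contra hy
  obtain ⟨f, u, hfT, hfy⟩ := geometric_hahn_banach_closed_point hTcv hTc hy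
  set x := (InnerProductSpace.toDual ℝ E).symm f
  have hx : ∀ w, ⟪x, w⟫ = f w := fun w => InnerProductSpace.toDual_symm_apply
  have hTu : suppFn T x ≤ u := suppFn_le hne fun w hw => (hx w).symm ▸ (hfT w hw).le
  linarith [h x, hx y]

section Nondegenerate

variable {Ξ : Type*} {S : Ξ → Set (EuclideanSpace ℝ (Fin N))}

lemma exists_inner_le_mul_suppFn (hS : ∀ ξ, IsGauge (S ξ)) (hnd : Nondegenerate S) {x : E}
    (hx : x ≠ 0) (z : E) : ∃ C, ∀ ξ, ∀ u ∈ S ξ, ⟪z, u⟫ ≤ C * suppFn (S ξ) x := by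
  obtain ⟨C, hC⟩ := hnd ((innerₛₗ ℝ z).smulRight ((‖x‖ ^ 2)⁻¹ • x))
  refine ⟨C, fun ξ u hu => ?_⟩
  obtain ⟨β, hβ, hβC, s, hs, hsu⟩ := hC ξ u hu
  have hzu : ⟪z, u⟫ = β * ⟪x, s⟫ := by
    have h := congrArg (⟪x, ·⟫) hsu
    simp only [LinearMap.smulRight_apply, innerₛₗ_apply_apply, real_inner_smul_right,
      real_inner_self_eq_norm_sq] at h
    rwa [inv_mul_cancel₀ (by simpa using hx), mul_one, eq_comm] at h
  calc ⟪z, u⟫ = β * ⟪x, s⟫ := hzu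
    _ ≤ β * suppFn (S ξ) x := by gcongr; exact inner_le_suppFn (hS ξ).1 hs
    _ ≤ C * suppFn (S ξ) x := by gcongr; exact suppFn_nonneg (hS ξ).1 (hS ξ).2.2 x

lemma suppFn_pos_of_nondegenerate (hS : ∀ ξ, IsGauge (S ξ)) (hnz : ∀ ξ, S ξ ≠ {0})
    (hnd : Nondegenerate S) {x : E} (hx : x ≠ 0) (ξ : Ξ) : 0 < suppFn (S ξ) x := by
  obtain ⟨v, hv, hv0⟩ := ((Set.nontrivial_iff_ne_singleton (hS ξ).2.2).2 (hnz ξ)).exists_ne 0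
  obtain ⟨C, hC⟩ := exists_inner_le_mul_suppFn hS hnd hx v
  have hvv : 0 < C * suppFn (S ξ) x := (real_inner_self_pos.2 hv0).trans_le (hC ξ v hv)
  refine (suppFn_nonneg (hS ξ).1 (hS ξ).2.2 x).lt_of_ne fun h => ?_
  rw [← h, mul_zero] at hvv
  exact hvv.false

/-- `J(x)` in the notation of the paper. -/
def normalizedHull (S : Ξ → Set E) (x : E) : Set E :=
  closure (convexHull ℝ (⋃ ξ, (1 / suppFn (S ξ) x) • S ξ))

lemma convex_normalizedHull (x : E) : Convex ℝ (normalizedHull S x) :=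
  (convex_convexHull ℝ _).closure

lemma zero_mem_normalizedHull [Nonempty Ξ] (hS : ∀ ξ, (0 : E) ∈ S ξ) (x : E) :
    0 ∈ normalizedHull S x := by
  obtain ⟨ξ⟩ := ‹Nonempty Ξ›
  exact subset_closure (subset_convexHull ℝ _ (Set.mem_iUnion.2 ⟨ξ, 0, hS ξ, smul_zero _⟩))

lemma subset_suppFn_smul_normalizedHull {x : E} {ξ : Ξ} (hpos : 0 < suppFn (S ξ) x) :
    S ξ ⊆ suppFn (S ξ) x • normalizedHull S x := fun u hu =>
  ⟨(1 / suppFn (S ξ) x) • u,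
    subset_closure (subset_convexHull ℝ _ (Set.mem_iUnion.2 ⟨ξ, u, hu, rfl⟩)),
    by simp only [smul_smul, mul_one_div_cancel hpos.ne', one_smul]⟩

lemma inner_le_one_of_mem_normalizedHull (hS : ∀ ξ, IsGauge (S ξ)) {x w : E}
    (hw : w ∈ normalizedHull S x) : ⟪x, w⟫ ≤ 1 := by
  suffices normalizedHull S x ⊆ {w | ⟪x, w⟫ ≤ 1} from this hw
  refine closure_minimal (convexHull_min ?_ ?_) (isClosed_le (by fun_prop) continuous_const)
  · rintro _ ⟨_, ⟨ξ, rfl⟩, u, hu, rfl⟩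
    rw [Set.mem_ofPred_eq, real_inner_smul_right, one_div_mul_eq_div]
    exact div_le_one_of_le₀ (inner_le_suppFn (hS ξ).1 hu) (suppFn_nonneg (hS ξ).1 (hS ξ).2.2 x)
  · exact convex_halfSpace_le (innerₛₗ ℝ x).isLinear 1

lemma isCompact_normalizedHull (hS : ∀ ξ, IsGauge (S ξ)) (hnd : Nondegenerate S) {x : E}
    (hx : x ≠ 0) : IsCompact (normalizedHull S x) := by
  refine isCompact_of_isClosed_isBounded isClosed_closure
    (isBounded_convexHull.2 (isBounded_of_forall_bddAbove_inner fun z => ?_)).closure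
  obtain ⟨C, hC⟩ := exists_inner_le_mul_suppFn hS hnd hx z
  refine ⟨max C 0, ?_⟩
  rintro _ ⟨_, ⟨_, ⟨ξ, rfl⟩, u, hu, rfl⟩, rfl⟩
  have hnonneg := suppFn_nonneg (hS ξ).1 (hS ξ).2.2 x
  simp only [real_inner_smul_right, one_div_mul_eq_div]
  exact div_le_of_le_mul₀ hnonneg (le_max_right C 0)
    ((hC ξ u hu).trans (by gcongr; exact le_max_left C 0))

end Nondegenerate

section HullDominated

variable {Ξ : Type*} {S : Ξ → Set (EuclideanSpace ℝ (Fin N))}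

def hullDominatedGauges (S : Ξ → Set E) : Set (Set E) :=
  {K | IsGauge K ∧ ∀ x ≠ 0, K ⊆ suppFn K x • normalizedHull S x}

lemma add_mem_hullDominatedGauges {K L : Set E} (hK : K ∈ hullDominatedGauges S)
    (hL : L ∈ hullDominatedGauges S) : K + L ∈ hullDominatedGauges S := by
  refine ⟨hK.1.add hL.1, fun x hx => ?_⟩
  rw [suppFn_add hK.1.1 ⟨0, hK.1.2.2⟩ hL.1.1 ⟨0, hL.1.2.2⟩,
    (convex_normalizedHull x).add_smul (suppFn_nonneg hK.1.1 hK.1.2.2 x)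
      (suppFn_nonneg hL.1.1 hL.1.2.2 x)]
  exact Set.add_subset_add (hK.2 x hx) (hL.2 x hx)

lemma smul_mem_hullDominatedGauges {K : Set E} (hK : K ∈ hullDominatedGauges S) {α : ℝ}
    (hα : 0 ≤ α) : α • K ∈ hullDominatedGauges S := by
  refine ⟨hK.1.smul α, fun x hx => ?_⟩
  rw [suppFn_smul hK.1.1 ⟨0, hK.1.2.2⟩ hα x, mul_smul]
  exact Set.smul_set_mono (hK.2 x hx)

lemma convexHull_union_mem_hullDominatedGauges [Nonempty Ξ] (hS : ∀ ξ, (0 : E) ∈ S ξ)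
    {K L : Set E} (hK : K ∈ hullDominatedGauges S) (hL : L ∈ hullDominatedGauges S) :
    convexHull ℝ (K ∪ L) ∈ hullDominatedGauges S := by
  refine ⟨hK.1.convexHull_union hL.1, fun x hx => ?_⟩
  rw [suppFn_convexHull (hK.1.1.union hL.1.1) ⟨0, Or.inl hK.1.2.2⟩,
    suppFn_union hK.1.1 ⟨0, hK.1.2.2⟩ hL.1.1 ⟨0, hL.1.2.2⟩]
  refine convexHull_min (Set.union_subset ?_ ?_) ((convex_normalizedHull x).smul _)
  · exact (hK.2 x hx).trans <| smul_subset_smul_of_zero_mem (convex_normalizedHull x)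
      (zero_mem_normalizedHull hS x) (suppFn_nonneg hK.1.1 hK.1.2.2 x) (le_max_left _ _)
  · exact (hL.2 x hx).trans <| smul_subset_smul_of_zero_mem (convex_normalizedHull x)
      (zero_mem_normalizedHull hS x) (suppFn_nonneg hL.1.1 hL.1.2.2 x) (le_max_right _ _)

lemma range_subset_hullDominatedGauges (hS : ∀ ξ, IsGauge (S ξ)) (hnz : ∀ ξ, S ξ ≠ {0})
    (hnd : Nondegenerate S) : Set.range S ⊆ hullDominatedGauges S := by
  rintro _ ⟨ξ, rfl⟩
  exact ⟨hS ξ, fun x hx =>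
    subset_suppFn_smul_normalizedHull (suppFn_pos_of_nondegenerate hS hnz hnd hx ξ)⟩

lemma isHausdorffClosed_hullDominatedGauges (hS : ∀ ξ, IsGauge (S ξ)) (hnd : Nondegenerate S) :
    IsHausdorffClosed (hullDominatedGauges S) := by
  have hset : {K : NonemptyCompacts E | (K : Set E) ∈ hullDominatedGauges S} =
      {K : NonemptyCompacts E | Convex ℝ (K : Set E)} ∩ {K | 0 ∈ K} ∩
        ⋂ (x : E) (_ : x ≠ 0), {K | (K : Set E) ⊆ suppFn K x • normalizedHull S x} := by
    ext K
    simp [hullDominatedGauges, IsGauge, K.isCompact, and_assoc]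
  rw [IsHausdorffClosed, hset]
  exact (NonemptyCompacts.isClosed_setOf_convex.inter (NonemptyCompacts.isClosed_setOf_mem 0)).inter
    (isClosed_biInter fun x hx =>
      NonemptyCompacts.isClosed_setOf_subset_suppFn_smul (isCompact_normalizedHull hS hnd hx) x)

lemma piUp_subset_hullDominatedGauges [Nonempty Ξ] (hS : ∀ ξ, IsGauge (S ξ))
    (hnz : ∀ ξ, S ξ ≠ {0}) (hnd : Nondegenerate S) :
    piUp (Set.range S) ⊆ hullDominatedGauges S :=
  Set.sInter_subset_of_mem ⟨fun _ hK => hK.1, isHausdorffClosed_hullDominatedGauges hS hnd,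
    range_subset_hullDominatedGauges hS hnz hnd, fun _ hK _ hL => add_mem_hullDominatedGauges hK hL,
    fun _ hK _ hα => smul_mem_hullDominatedGauges hK hα,
    fun _ hK _ hL => convexHull_union_mem_hullDominatedGauges (fun ξ => (hS ξ).2.2) hK hL⟩

end HullDominated

theorem piUp_simple_representation_general {N : ℕ} {Ξ : Type*} [Nonempty Ξ]
    (S : Ξ → Set (EuclideanSpace ℝ (Fin N)))
    (hg : ∀ ξ, IsGauge (S ξ))
    (hnz : ∀ ξ, S ξ ≠ {0})
    (hnd : Nondegenerate S)
    (T : Set (EuclideanSpace ℝ (Fin N))) (hT : IsGauge T)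
    (hTmem : T ∈ piUp (Set.range S)) :
    T = ⋂ (x : EuclideanSpace ℝ (Fin N)) (_ : x ≠ 0),
        suppFn T x •
          closure (convexHull ℝ (⋃ ξ, (1 / suppFn (S ξ) x) • S ξ)) := by
  have hTdom : T ∈ hullDominatedGauges S := piUp_subset_hullDominatedGauges hg hnz hnd hTmem
  refine (Set.subset_iInter₂ hTdom.2).antisymm fun y hy => ?_
  refine mem_of_forall_inner_le_suppFn hT.1.isClosed hT.2.1 ⟨0, hT.2.2⟩ fun x => ?_
  rcases eq_or_ne x 0 with rfl | hx
  · simpa using suppFn_nonneg hT.1 hT.2.2 0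
  obtain ⟨j, hj, rfl⟩ := Set.mem_iInter₂.1 hy x hx
  rw [real_inner_smul_right]
  exact mul_le_of_le_one_right (suppFn_nonneg hT.1 hT.2.2 x)
    (inner_le_one_of_mem_normalizedHull hg hj)

/-- **(4.2.2).**  Every nonzero gauge `T ∈ π↑(Ξ)` satisfies
`T = ⋂_{x ≠ 0} h_T(x) • J(x)` where `J(x)` is the closed convex hull of
`⋃_ξ (1/h_{S ξ}(x)) • S ξ`. -/
theorem piUp_simple_representation {N : ℕ} {Ξ : Type*} [Nonempty Ξ]
    (S : Ξ → Set (EuclideanSpace ℝ (Fin N)))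
    (hg : ∀ ξ, IsGauge (S ξ))
    (hnz : ∀ ξ, S ξ ≠ {0})
    (hsymm : ∀ ξ, S ξ = -S ξ)
    (hnd : Nondegenerate S)
    (T : Set (EuclideanSpace ℝ (Fin N))) (hT : IsGauge T) (hTnz : T ≠ {0})
    (hTmem : T ∈ piUp (Set.range S)) :
    T = ⋂ (x : EuclideanSpace ℝ (Fin N)) (_ : x ≠ 0),
        suppFn T x •
          closure (convexHull ℝ (⋃ ξ, (1 / suppFn (S ξ) x) • S ξ)) :=
  piUp_simple_representation_general S hg hnz hnd T hT hTmem
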